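/- Let G=(V,E,W) be a finite graph, m_ij ≥ 0 time-independent reals for edges (i,j)∈E, and m_ii real numbers. Let (ρ(t),S(t)) be a C¹ solution with ρ_i(t) > 0 of the SBP Hamiltonian system: Ṡ_i = −m_ii − (1/2) Σ_{j∈N(i)} e^{S_j−S_i} m_ij √(ρ_j/ρ_i) − (1/2) Σ_{j∈N(i)} e^{S_i−S_j} m_ji √(ρ_j/ρ_i), and ρ̇_i = Σ_{j∈N(i)} e^{S_i−S_j} m_ji √(ρ_i ρ_j) − Σ_{j∈N(i)} e^{S_j−S_i} m_ij √(ρ_i ρ_j). Then the quantity Σ_{i∈V} Σ_{j∈N(i)} e^{S_j(t)−S_i(t)} m_ij √(ρ_i(t) ρ_j(t)) + Σ_{i∈V} m_ii ρ_i(t) is constant in t. -/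

import Mathlib

/-!
Writing `a_ij = e^{S_j-S_i} m_ij √(ρ_i ρ_j)`, the SBP system is Hamilton's system
`Ṡ_i = -∂H/∂ρ_i`, `ρ̇_i = ∂H/∂S_i` for `H = Σ_i Σ_{j∈N(i)} a_ij + Σ_i m_ii ρ_i`, where
`∂H/∂S_i = Σ_j a_ji - Σ_j a_ij` and `∂H/∂ρ_i = m_ii + (Σ_j a_ij + Σ_j a_ji) / (2ρ_i)`
(the logarithmic derivative of `a_ij` is `Ṡ_j - Ṡ_i + ρ̇_i/(2ρ_i) + ρ̇_j/(2ρ_j)`).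
Along a solution the chain rule gives `dH/dt = Σ_i (∂H/∂S_i Ṡ_i + ∂H/∂ρ_i ρ̇_i) = 0`.
-/

open Real Finset

theorem SimpleGraph.sum_sum_neighborFinset_comm {V M : Type*} [Fintype V] [AddCommMonoid M]
    (G : SimpleGraph V) [DecidableRel G.Adj] (f : V → V → M) :
    ∑ i, ∑ j ∈ G.neighborFinset i, f i j = ∑ i, ∑ j ∈ G.neighborFinset i, f j i :=
  sum_comm' (by simp [G.adj_comm])

theorem Real.sqrt_div_eq_sqrt_mul_div {x y : ℝ} (hx : 0 < x) : √(y / x) = √(x * y) / x := by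
  rw [show y / x = x * y / x ^ 2 by field_simp, sqrt_div' _ (sq_nonneg x), sqrt_sq hx.le]

theorem HasDerivAt.sqrt_mul_of_pos {f g : ℝ → ℝ} {f' g' t : ℝ} (hf : HasDerivAt f f' t)
    (hg : HasDerivAt g g' t) (hft : 0 < f t) (hgt : 0 < g t) :
    HasDerivAt (fun τ => √(f τ * g τ)) (√(f t * g t) * (f' / (2 * f t) + g' / (2 * g t))) t := by
  have hfg : 0 < f t * g t := mul_pos hft hgt
  refine ((hf.fun_mul hg).sqrt hfg.ne').congr_deriv ?_
  have hsq : √(f t * g t) ^ 2 = f t * g t := sq_sqrt hfg.le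
  field_simp
  rw [mul_comm (g t), hsq]
  ring

section SBP

variable {V : Type*} (G : SimpleGraph V) (m : V → V → ℝ)

noncomputable def sbpFlux (ρ S : V → ℝ) (i j : V) : ℝ :=
  exp (S j - S i) * m i j * √(ρ i * ρ j)

theorem hasDerivAt_sbpFlux {ρ S : ℝ → V → ℝ} {ρ' S' : V → ℝ} {t : ℝ}
    (hρpos : ∀ i, 0 < ρ t i) (hρ : ∀ i, HasDerivAt (fun τ => ρ τ i) (ρ' i) t)
    (hS : ∀ i, HasDerivAt (fun τ => S τ i) (S' i) t) (i j : V) :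
    HasDerivAt (fun τ => sbpFlux m (ρ τ) (S τ) i j)
      (sbpFlux m (ρ t) (S t) i j *
        (S' j - S' i + ρ' i / (2 * ρ t i) + ρ' j / (2 * ρ t j))) t := by
  refine ((((hS j).fun_sub (hS i)).exp.mul_const (m i j)).fun_mul
    ((hρ i).sqrt_mul_of_pos (hρ j) (hρpos i) (hρpos j))).congr_deriv ?_
  simp only [sbpFlux]
  ring

variable [Fintype V] [DecidableRel G.Adj]

noncomputable def sbpOutflux (ρ S : V → ℝ) (i : V) : ℝ :=
  ∑ j ∈ G.neighborFinset i, sbpFlux m ρ S i j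

noncomputable def sbpInflux (ρ S : V → ℝ) (i : V) : ℝ :=
  ∑ j ∈ G.neighborFinset i, sbpFlux m ρ S j i

noncomputable def sbpHamiltonian (ρ S : V → ℝ) : ℝ :=
  ∑ i, sbpOutflux G m ρ S i + ∑ i, m i i * ρ i

theorem sbpInflux_eq (ρ S : V → ℝ) (i : V) :
    sbpInflux G m ρ S i =
      ∑ j ∈ G.neighborFinset i, exp (S i - S j) * m j i * √(ρ i * ρ j) := by
  simp only [sbpInflux, sbpFlux, mul_comm (ρ _) (ρ i)]

theorem sbpOutflux_add_sbpInflux_div {ρ : V → ℝ} (hρ : ∀ i, 0 < ρ i) (S : V → ℝ) (i : V) :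
    (sbpOutflux G m ρ S i + sbpInflux G m ρ S i) / ρ i =
      ∑ j ∈ G.neighborFinset i, exp (S j - S i) * m i j * √(ρ j / ρ i)
        + ∑ j ∈ G.neighborFinset i, exp (S i - S j) * m j i * √(ρ j / ρ i) := by
  simp only [sbpOutflux, sbpInflux, sbpFlux, add_div, sum_div,
    sqrt_div_eq_sqrt_mul_div (hρ i), mul_div_assoc, mul_comm (ρ _) (ρ i)]

theorem sum_sum_sbpFlux_mul (ρ S x y : V → ℝ) :
    ∑ i, ∑ j ∈ G.neighborFinset i, sbpFlux m ρ S i j * (x j - x i + y i + y j) =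
      ∑ i, ((sbpInflux G m ρ S i - sbpOutflux G m ρ S i) * x i
        + (sbpOutflux G m ρ S i + sbpInflux G m ρ S i) * y i) := by
  have hsplit : ∀ i j, sbpFlux m ρ S i j * (x j - x i + y i + y j) =
      sbpFlux m ρ S i j * (y i - x i) + sbpFlux m ρ S i j * (x j + y j) := fun i j => by ring
  simp only [hsplit, sum_add_distrib]
  rw [G.sum_sum_neighborFinset_comm (fun i j => sbpFlux m ρ S i j * (x j + y j)),
    ← sum_add_distrib, ← sum_add_distrib]
  refine sum_congr rfl fun i _ => ?_
  simp only [sbpOutflux, sbpInflux, ← sum_mul]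
  ring

theorem hasDerivAt_sbpHamiltonian {ρ S : ℝ → V → ℝ} {ρ' S' : V → ℝ} {t : ℝ}
    (hρpos : ∀ i, 0 < ρ t i) (hρ : ∀ i, HasDerivAt (fun τ => ρ τ i) (ρ' i) t)
    (hS : ∀ i, HasDerivAt (fun τ => S τ i) (S' i) t) :
    HasDerivAt (fun τ => sbpHamiltonian G m (ρ τ) (S τ))
      (∑ i, ((sbpInflux G m (ρ t) (S t) i - sbpOutflux G m (ρ t) (S t) i) * S' i
        + (m i i + (sbpOutflux G m (ρ t) (S t) i + sbpInflux G m (ρ t) (S t) i)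
            / (2 * ρ t i)) * ρ' i)) t := by
  have hflux := (HasDerivAt.fun_sum (u := univ) fun i _ =>
    HasDerivAt.fun_sum (u := G.neighborFinset i) fun j _ =>
      hasDerivAt_sbpFlux m hρpos hρ hS i j).fun_add
    (HasDerivAt.fun_sum (u := univ) fun i _ => (hρ i).const_mul (m i i))
  refine hflux.congr_deriv ?_
  rw [sum_sum_sbpFlux_mul G m (ρ t) (S t) S' (fun i => ρ' i / (2 * ρ t i)), ← sum_add_distrib]
  refine sum_congr rfl fun i _ => ?_
  field_simp
  ring

end SBP

theorem sbp_hamiltonian_conservation_general {N : ℕ}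
    (G : SimpleGraph (Fin N)) [DecidableRel G.Adj]
    (m : Fin N → Fin N → ℝ)
    (ρ S : ℝ → Fin N → ℝ)
    (hρ_pos : ∀ t i, 0 < ρ t i)
    (hS : ∀ t i, HasDerivAt (fun τ => S τ i)
        (- m i i
          - (1/2) * ∑ j ∈ G.neighborFinset i,
              Real.exp (S t j - S t i) * m i j * Real.sqrt (ρ t j / ρ t i)
          - (1/2) * ∑ j ∈ G.neighborFinset i,
              Real.exp (S t i - S t j) * m j i * Real.sqrt (ρ t j / ρ t i)) t)
    (hρ : ∀ t i, HasDerivAt (fun τ => ρ τ i)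
        ((∑ j ∈ G.neighborFinset i,
            Real.exp (S t i - S t j) * m j i * Real.sqrt (ρ t i * ρ t j))
         - ∑ j ∈ G.neighborFinset i,
            Real.exp (S t j - S t i) * m i j * Real.sqrt (ρ t i * ρ t j)) t) :
    ∀ s t : ℝ,
      (∑ i, ∑ j ∈ G.neighborFinset i,
          Real.exp (S s j - S s i) * m i j * Real.sqrt (ρ s i * ρ s j))
        + ∑ i, m i i * ρ s i
      = (∑ i, ∑ j ∈ G.neighborFinset i,
          Real.exp (S t j - S t i) * m i j * Real.sqrt (ρ t i * ρ t j))
        + ∑ i, m i i * ρ t i := by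
  have hH : ∀ t, HasDerivAt (fun τ => sbpHamiltonian G m (ρ τ) (S τ)) 0 t := by
    intro t
    have hSt : ∀ i, HasDerivAt (fun τ => S τ i) (-(m i i +
        (sbpOutflux G m (ρ t) (S t) i + sbpInflux G m (ρ t) (S t) i) / (2 * ρ t i))) t := by
      refine fun i => (hS t i).congr_deriv ?_
      rw [mul_comm 2, ← div_div, sbpOutflux_add_sbpInflux_div G m (hρ_pos t)]
      ring
    have hρt : ∀ i, HasDerivAt (fun τ => ρ τ i)
        (sbpInflux G m (ρ t) (S t) i - sbpOutflux G m (ρ t) (S t) i) t := by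
      intro i
      rw [sbpInflux_eq]
      exact hρ t i
    exact (hasDerivAt_sbpHamiltonian G m (hρ_pos t) hρt hSt).congr_deriv
      (sum_eq_zero fun i _ => by ring)
  intro s t
  exact is_const_of_deriv_eq_zero (fun u => (hH u).differentiableAt) (fun u => (hH u).deriv) s t

/-- Along any C¹ positive solution of the SBP Hamiltonian system on a finite
graph with time-independent rates `m_ij ≥ 0` (edges) and diagonal entries `m_ii ∈ ℝ`, the
Hamiltonian `Σ_i Σ_{j∈N(i)} e^{S_j−S_i} m_ij √(ρ_i ρ_j) + Σ_i m_ii ρ_i` is constant in time. -/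
theorem sbp_hamiltonian_conservation {N : ℕ}
    (G : SimpleGraph (Fin N)) [DecidableRel G.Adj]
    (m : Fin N → Fin N → ℝ)
    (hm_nonneg : ∀ i j, G.Adj i j → 0 ≤ m i j)
    (ρ S : ℝ → Fin N → ℝ)
    (hρ_pos : ∀ t i, 0 < ρ t i)
    (hS : ∀ t i, HasDerivAt (fun τ => S τ i)
        (- m i i
          - (1/2) * ∑ j ∈ G.neighborFinset i,
              Real.exp (S t j - S t i) * m i j * Real.sqrt (ρ t j / ρ t i)
          - (1/2) * ∑ j ∈ G.neighborFinset i,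
              Real.exp (S t i - S t j) * m j i * Real.sqrt (ρ t j / ρ t i)) t)
    (hρ : ∀ t i, HasDerivAt (fun τ => ρ τ i)
        ((∑ j ∈ G.neighborFinset i,
            Real.exp (S t i - S t j) * m j i * Real.sqrt (ρ t i * ρ t j))
         - ∑ j ∈ G.neighborFinset i,
            Real.exp (S t j - S t i) * m i j * Real.sqrt (ρ t i * ρ t j)) t) :
    ∀ s t : ℝ,
      (∑ i, ∑ j ∈ G.neighborFinset i,
          Real.exp (S s j - S s i) * m i j * Real.sqrt (ρ s i * ρ s j))
        + ∑ i, m i i * ρ s i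
      = (∑ i, ∑ j ∈ G.neighborFinset i,
          Real.exp (S t j - S t i) * m i j * Real.sqrt (ρ t i * ρ t j))
        + ∑ i, m i i * ρ t i :=
  sbp_hamiltonian_conservation_general G m ρ S hρ_pos hS hρ
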